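/- arXiv:2504.14057 — 2 statements merged into one kernel-verified Lean document; each statement's English description precedes it below -/
import Mathlib

section
/- Let H be a Hilbert space and H1, H2, H3 closed subspaces with H2 ⊆ H1 ∩ H3. Then p1 ∘ p3 = p2 if and only if the subspaces H1 ∩ H2^⊥ and H3 ∩ H2^⊥ are orthogonal. -/
/-- The orthogonal projection onto a closed subspace, as an operator `H →L[ℂ] H`. -/
noncomputable def orthProj {H : Type*} [NormedAddCommGroup H] [InnerProductSpace ℂ H]
    [CompleteSpace H] (K : Submodule ℂ H) (hK : IsClosed (K : Set H)) : H →L[ℂ] H :=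
  haveI : CompleteSpace K := hK.completeSpace_coe
  K.subtypeL.comp K.orthogonalProjectionOnto

/-! Since `H₂ ⊆ H₁ ∩ H₃`, `p₁ p₃` is the identity on `H₂`, so `p₁ p₃ = p₂` amounts to `p₁ p₃`
vanishing on `H₂ᗮ`. A projection onto a space containing `H₂` preserves `H₂ᗮ`, so for `w ∈ H₂ᗮ`
we get `p₃ w ∈ H₃ ∩ H₂ᗮ ⊆ (H₁ ∩ H₂ᗮ)ᗮ` by orthogonality, and `p₁ p₃ w` lies both in `H₁ ∩ H₂ᗮ`
and, as `p₁` also preserves `(H₁ ∩ H₂ᗮ)ᗮ`, in its complement; hence `p₁ p₃ w = 0`. Conversely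
`⟪x, y⟫ = ⟪x, p₁ p₃ y⟫ = ⟪x, p₂ y⟫ = 0` for `x ∈ H₁ ∩ H₂ᗮ`, `y ∈ H₃ ∩ H₂ᗮ`. -/

open Submodule InnerProductSpace

section starProjection

variable {𝕜 E : Type*} [RCLike 𝕜] [NormedAddCommGroup E] [InnerProductSpace 𝕜 E]

theorem Submodule.starProjection_mem_orthogonal_of_le {K L : Submodule 𝕜 E}
    [L.HasOrthogonalProjection] (h : K ≤ L) {v : E} (hv : v ∈ Kᗮ) :
    L.starProjection v ∈ Kᗮ := by
  rw [← sub_sub_cancel v (L.starProjection v)]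
  exact sub_mem hv (orthogonal_le h (sub_starProjection_mem_orthogonal v))

variable {U V W : Submodule 𝕜 E} [U.HasOrthogonalProjection] [V.HasOrthogonalProjection]

theorem Submodule.starProjection_starProjection_eq_zero_of_isOrtho (hWU : W ≤ U) (hWV : W ≤ V)
    (hUV : U ⊓ Wᗮ ⟂ V ⊓ Wᗮ) {w : E} (hw : w ∈ Wᗮ) :
    U.starProjection (V.starProjection w) = 0 := by
  set y := V.starProjection w
  have hy : y ∈ (U ⊓ Wᗮ)ᗮ :=
    hUV.ge ⟨starProjection_apply_mem V w, starProjection_mem_orthogonal_of_le hWV hw⟩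
  have hxK : U.starProjection y ∈ U ⊓ Wᗮ :=
    ⟨starProjection_apply_mem U y, starProjection_mem_orthogonal_of_le hWU
      (starProjection_mem_orthogonal_of_le hWV hw)⟩
  have hxKperp : U.starProjection y ∈ (U ⊓ Wᗮ)ᗮ :=
    starProjection_mem_orthogonal_of_le inf_le_left hy
  exact inner_self_eq_zero.mp (hxKperp _ hxK)

theorem Submodule.starProjection_comp_starProjection_eq_iff_isOrtho [W.HasOrthogonalProjection]
    (hWU : W ≤ U) (hWV : W ≤ V) :
    U.starProjection ∘L V.starProjection = W.starProjection ↔ U ⊓ Wᗮ ⟂ V ⊓ Wᗮ := by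
  constructor
  · intro h
    rw [isOrtho_iff_inner_eq]
    rintro x ⟨hxU, hxW⟩ y ⟨hyV, hyW⟩
    calc ⟪x, y⟫_𝕜 = ⟪U.starProjection x, V.starProjection y⟫_𝕜 := by
          rw [starProjection_eq_self_iff.mpr hxU, starProjection_eq_self_iff.mpr hyV]
      _ = ⟪x, W.starProjection y⟫_𝕜 := by
          rw [inner_starProjection_left_eq_right, ← ContinuousLinearMap.comp_apply, h]
      _ = 0 := by rw [(starProjection_apply_eq_zero_iff W).mpr hyW, inner_zero_right]
  · intro hUV
    ext z
    have hWz : W.starProjection z ∈ W := starProjection_apply_mem W z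
    conv_lhs =>
      rw [ContinuousLinearMap.comp_apply, ← W.starProjection_add_starProjection_orthogonal z]
    rw [map_add, map_add, starProjection_eq_self_iff.mpr (hWV hWz),
      starProjection_eq_self_iff.mpr (hWU hWz),
      starProjection_starProjection_eq_zero_of_isOrtho hWU hWV hUV
        (starProjection_apply_mem Wᗮ z), add_zero]

end starProjection

theorem orthProj_eq_starProjection {H : Type*} [NormedAddCommGroup H] [InnerProductSpace ℂ H]
    [CompleteSpace H] (K : Submodule ℂ H) [K.HasOrthogonalProjection]
    (hK : IsClosed (K : Set H)) : orthProj K hK = K.starProjection :=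
  rfl

/-- For closed subspaces with `H₂ ⊆ H₁ ∩ H₃`, one has `p₁ ∘ p₃ = p₂` iff the subspaces
`H₁ ∩ H₂ᗮ` and `H₃ ∩ H₂ᗮ` are orthogonal. -/
theorem proj_comp_eq_iff_orthogonal
    {H : Type*} [NormedAddCommGroup H] [InnerProductSpace ℂ H] [CompleteSpace H]
    (H1 H2 H3 : Submodule ℂ H)
    (h1 : IsClosed (H1 : Set H)) (h2 : IsClosed (H2 : Set H)) (h3 : IsClosed (H3 : Set H))
    (hle : H2 ≤ H1 ⊓ H3) :
    (orthProj H1 h1).comp (orthProj H3 h3) = orthProj H2 h2 ↔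
      ∀ x ∈ H1 ⊓ H2ᗮ, ∀ y ∈ H3 ⊓ H2ᗮ, (inner ℂ x y : ℂ) = 0 := by
  have := h1.completeSpace_coe
  have := h2.completeSpace_coe
  have := h3.completeSpace_coe
  obtain ⟨h21, h23⟩ := le_inf_iff.mp hle
  simp only [orthProj_eq_starProjection]
  rw [starProjection_comp_starProjection_eq_iff_isOrtho h21 h23, isOrtho_iff_inner_eq]
end

section
/- Let H be a Hilbert space, (B_n) an increasing sequence of closed subspaces whose union is dense in H, and (C_n) a decreasing sequence of closed subspaces with intersection T. Suppose that for each n the composition p_{C_n} ∘ p_{B_n} equals a fixed orthogonal projection p_A. Then p_T = p_A. -/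
/-!
Since `p_A = p_{C n} ∘ p_{B n}` has range inside `C n`, we get `A ≤ C n` for every `n`.
Conversely, for `x ∈ T` we have `x = p_{C n} x`, so
`‖p_A x - x‖ = ‖p_{C n} (p_{B n} x - x)‖ ≤ ‖p_{B n} x - x‖`,
which tends to `0` because the `B n` exhaust a dense subspace; hence `x ∈ A`.
So `A = T`.
-/

open Filter Topology

namespace Submodule

variable {𝕜 E : Type*} [RCLike 𝕜] [NormedAddCommGroup E] [InnerProductSpace 𝕜 E]

theorem le_of_starProjection_comp_eq {A C : Submodule 𝕜 E} [A.HasOrthogonalProjection]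
    [C.HasOrthogonalProjection] {P : E →L[𝕜] E} (h : C.starProjection ∘L P = A.starProjection) :
    A ≤ C := by
  intro x hx
  rw [← starProjection_eq_self_iff.mpr hx, ← h]
  exact coe_mem _

theorem norm_starProjection_sub_le_of_mem {K : Submodule 𝕜 E} [K.HasOrthogonalProjection]
    {x : E} (hx : x ∈ K) (y : E) : ‖K.starProjection y - x‖ ≤ ‖y - x‖ := by
  conv_lhs => rw [← starProjection_eq_self_iff.mpr hx, ← map_sub]
  exact K.norm_starProjection_apply_le _

theorem tendsto_starProjection_of_dense_iUnion {ι : Type*} [Preorder ι] {B : ι → Submodule 𝕜 E}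
    [∀ i, (B i).HasOrthogonalProjection] (hB : Monotone B) (hdense : Dense (⋃ i, (B i : Set E)))
    (x : E) : Tendsto (fun i ↦ (B i).starProjection x) atTop (𝓝 x) := by
  refine starProjection_tendsto_self B hB x ?_
  have hsup : Dense ((⨆ i, B i : Submodule 𝕜 E) : Set E) :=
    hdense.mono <| Set.iUnion_subset fun i ↦ SetLike.coe_subset_coe.mpr (le_iSup B i)
  exact (dense_iff_topologicalClosure_eq_top.mp hsup).ge

theorem iInf_le_of_starProjection_comp_eq {ι : Type*} [Preorder ι] [IsDirectedOrder ι]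
    [Nonempty ι] {B C : ι → Submodule 𝕜 E} {A : Submodule 𝕜 E}
    [∀ i, (B i).HasOrthogonalProjection] [∀ i, (C i).HasOrthogonalProjection]
    [A.HasOrthogonalProjection] (hB : Monotone B) (hdense : Dense (⋃ i, (B i : Set E)))
    (h : ∀ i, (C i).starProjection ∘L (B i).starProjection = A.starProjection) :
    ⨅ i, C i ≤ A := by
  intro x hx
  have hbound : ∀ i, ‖A.starProjection x - x‖ ≤ ‖(B i).starProjection x - x‖ := fun i ↦ by
    rw [← h i]
    exact norm_starProjection_sub_le_of_mem (mem_iInf C |>.mp hx i) _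
  have hlim : Tendsto (fun i ↦ ‖(B i).starProjection x - x‖) atTop (𝓝 0) := by
    simpa using ((tendsto_starProjection_of_dense_iUnion hB hdense x).sub_const x).norm
  have hzero : ‖A.starProjection x - x‖ ≤ 0 := ge_of_tendsto' hlim hbound
  rw [norm_le_zero_iff, sub_eq_zero, starProjection_eq_self_iff] at hzero
  exact hzero

theorem eq_iInf_of_starProjection_comp_eq {ι : Type*} [Preorder ι] [IsDirectedOrder ι]
    [Nonempty ι] {B C : ι → Submodule 𝕜 E} {A : Submodule 𝕜 E}
    [∀ i, (B i).HasOrthogonalProjection] [∀ i, (C i).HasOrthogonalProjection]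
    [A.HasOrthogonalProjection] (hB : Monotone B) (hdense : Dense (⋃ i, (B i : Set E)))
    (h : ∀ i, (C i).starProjection ∘L (B i).starProjection = A.starProjection) :
    A = ⨅ i, C i :=
  le_antisymm (le_iInf fun i ↦ le_of_starProjection_comp_eq (h i))
    (iInf_le_of_starProjection_comp_eq hB hdense h)

end Submodule

theorem proj_inf_eq_of_comp_eq_general
    {H : Type*} [NormedAddCommGroup H] [InnerProductSpace ℂ H] [CompleteSpace H]
    (B C : ℕ → Submodule ℂ H) (A : Submodule ℂ H)
    (hBcl : ∀ n, IsClosed ((B n : Set H))) (hCcl : ∀ n, IsClosed ((C n : Set H)))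
    (hA : IsClosed (A : Set H))
    (hBmono : ∀ n, B n ≤ B (n + 1))
    (hBdense : Dense (⋃ n, (B n : Set H)))
    (hTcl : IsClosed ((⨅ n, C n : Submodule ℂ H) : Set H))
    (hcomp : ∀ n, (orthProj (C n) (hCcl n)).comp (orthProj (B n) (hBcl n)) = orthProj A hA) :
    orthProj (⨅ n, C n) hTcl = orthProj A hA := by
  have (n : ℕ) : CompleteSpace (B n) := (hBcl n).completeSpace_coe
  have (n : ℕ) : CompleteSpace (C n) := (hCcl n).completeSpace_coe
  have : CompleteSpace A := hA.completeSpace_coe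
  -- `orthProj K hK` unfolds to `K.starProjection`, so `hcomp` applies as it stands.
  obtain rfl : A = ⨅ n, C n :=
    Submodule.eq_iInf_of_starProjection_comp_eq (monotone_nat_of_le_succ hBmono) hBdense hcomp
  rfl

/-- If `(B n)` is an increasing sequence of closed subspaces with dense union, `(C n)` a
decreasing sequence of closed subspaces with intersection `T`, and `p_{C n} ∘ p_{B n} = p_A`
for every `n`, then `p_T = p_A`. -/
theorem proj_inf_eq_of_comp_eq
    {H : Type*} [NormedAddCommGroup H] [InnerProductSpace ℂ H] [CompleteSpace H]
    (B C : ℕ → Submodule ℂ H) (A : Submodule ℂ H)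
    (hBcl : ∀ n, IsClosed ((B n : Set H))) (hCcl : ∀ n, IsClosed ((C n : Set H)))
    (hA : IsClosed (A : Set H))
    (hBmono : ∀ n, B n ≤ B (n + 1))
    (hBdense : Dense (⋃ n, (B n : Set H)))
    (hCmono : ∀ n, C (n + 1) ≤ C n)
    (hTcl : IsClosed ((⨅ n, C n : Submodule ℂ H) : Set H))
    (hcomp : ∀ n, (orthProj (C n) (hCcl n)).comp (orthProj (B n) (hBcl n)) = orthProj A hA) :
    orthProj (⨅ n, C n) hTcl = orthProj A hA :=
  proj_inf_eq_of_comp_eq_general B C A hBcl hCcl hA hBmono hBdense hTcl hcomp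
end
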